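/- Let m ≥ 1 and let θ_{1i}, θ_{2i} ∈ (0, π) for each i ∈ {3,…,m+2}. There exists ρ ∈ (0, π) such that for every i ∈ {3,…,m+2} the 3×3 matrix [[1, cos ρ, cos θ_{1i}], [cos ρ, 1, cos θ_{2i}], [cos θ_{1i}, cos θ_{2i}, 1]] is positive definite, if and only if for all a ∈ {1,2} and all i, j ∈ {3,…,m+2} one has 2θ_{ai} < θ_{1i} + θ_{2i} + θ_{1j} + θ_{2j} < 2π + 2θ_{ai}. -/

import Mathlib

/-!
For `ρ ∈ (0, π)` the cosine matrix is positive definite iff its determinant is positive, and the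
determinant factors as `(cos (α - β) - cos ρ) * (cos ρ - cos (α + β))`. By monotonicity of `cos`
on `[0, π]`, the `i`-th matrix is therefore positive definite iff `ρ` lies in the open interval
`(|θ₀ᵢ - θ₁ᵢ|, min (θ₀ᵢ + θ₁ᵢ) (2π - θ₀ᵢ - θ₁ᵢ))`. Finitely many such intervals (all inside
`[0, π]`) share a point of `(0, π)` iff every lower endpoint lies below every upper endpoint, and
these comparisons unfold to the stated inequalities.
-/

open Real Matrix

theorem exists_mem_Ioo_forall_lt_and_lt_iff {α ι : Type*} [LinearOrder α] [DenselyOrdered α]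
    [Finite ι] {a b : α} {l u : ι → α} (hab : a < b) (hl : ∀ i, a ≤ l i) (hu : ∀ i, u i ≤ b) :
    (∃ x ∈ Set.Ioo a b, ∀ i, l i < x ∧ x < u i) ↔ ∀ i j, l i < u j := by
  refine ⟨fun ⟨x, _, hx⟩ i j => (hx i).1.trans (hx j).2, fun h => ?_⟩
  obtain ⟨x, hlx, hxu⟩ := Set.Finite.exists_between
    ((Set.finite_range l).insert a) (Set.insert_nonempty _ _)
    ((Set.finite_range u).insert b) (Set.insert_nonempty _ _) <| by
      simp only [Set.forall_mem_insert, Set.forall_mem_range]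
      exact ⟨⟨hab, fun j => (hl j).trans_lt (h j j)⟩,
        fun i => ⟨(h i i).trans_le (hu i), h i⟩⟩
  simp only [Set.forall_mem_insert, Set.forall_mem_range] at hlx hxu
  exact ⟨x, ⟨hlx.1, hxu.1⟩, fun i => ⟨hlx.2 i, hxu.2 i⟩⟩

theorem det_unitDiag_fin_three (p a b : ℝ) :
    (!![1, p, a; p, 1, b; a, b, 1] : Matrix (Fin 3) (Fin 3) ℝ).det
      = 1 + 2 * p * a * b - p ^ 2 - a ^ 2 - b ^ 2 := by
  rw [det_fin_three]
  simp only [of_apply, cons_val', cons_val_zero, cons_val_one, cons_val, cons_val_fin_one]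
  ring

/-- Completing the square twice (the `LDLᵀ` factorization), with the denominator `1 - p ^ 2`
cleared. -/
theorem one_sub_sq_mul_dotProduct_mulVec_unitDiag_fin_three (p a b : ℝ) (x : Fin 3 → ℝ) :
    (1 - p ^ 2) * (star x ⬝ᵥ (!![1, p, a; p, 1, b; a, b, 1] *ᵥ x))
      = (1 - p ^ 2) * (x 0 + p * x 1 + a * x 2) ^ 2 + ((1 - p ^ 2) * x 1 + (b - p * a) * x 2) ^ 2
        + (1 + 2 * p * a * b - p ^ 2 - a ^ 2 - b ^ 2) * x 2 ^ 2 := by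
  simp only [dotProduct, mulVec, Fin.sum_univ_three, of_apply, cons_val', cons_val_zero,
    cons_val_one, cons_val, cons_val_fin_one, Pi.star_apply, star_trivial]
  ring

theorem posDef_unitDiag_fin_three_iff {p a b : ℝ} (hp : p ^ 2 < 1) :
    (!![1, p, a; p, 1, b; a, b, 1] : Matrix (Fin 3) (Fin 3) ℝ).PosDef ↔
      0 < 1 + 2 * p * a * b - p ^ 2 - a ^ 2 - b ^ 2 := by
  refine ⟨fun h => det_unitDiag_fin_three p a b ▸ h.det_pos, fun hD => ?_⟩
  refine PosDef.of_dotProduct_mulVec_pos ?_ fun x hx => ?_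
  · ext i j
    fin_cases i <;> fin_cases j <;> rfl
  have hp' : 0 < 1 - p ^ 2 := by linarith
  have hsum := one_sub_sq_mul_dotProduct_mulVec_unitDiag_fin_three p a b x
  by_contra! hle
  have h1 := mul_nonneg hp'.le (sq_nonneg (x 0 + p * x 1 + a * x 2))
  have h2 := sq_nonneg ((1 - p ^ 2) * x 1 + (b - p * a) * x 2)
  have h3 := mul_nonneg hD.le (sq_nonneg (x 2))
  have hneg := mul_nonpos_of_nonneg_of_nonpos hp'.le hle
  have hx2 : x 2 = 0 := by
    have : (1 + 2 * p * a * b - p ^ 2 - a ^ 2 - b ^ 2) * x 2 ^ 2 = 0 := by linarith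
    simpa [hD.ne'] using this
  have hx1 : x 1 = 0 := by
    have : ((1 - p ^ 2) * x 1 + (b - p * a) * x 2) ^ 2 = 0 := by linarith
    simpa [hx2, hp'.ne'] using this
  have hx0 : x 0 = 0 := by
    have : (1 - p ^ 2) * (x 0 + p * x 1 + a * x 2) ^ 2 = 0 := by linarith
    simpa [hx1, hx2, hp'.ne'] using this
  exact hx (by ext i; fin_cases i <;> assumption)

theorem min_two_pi_sub_le_pi (s : ℝ) : min s (2 * π - s) ≤ π := by
  rcases le_total s π with h | h
  · exact min_le_of_left_le h
  · exact min_le_of_right_le (by linarith)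

theorem cos_eq_cos_min_two_pi_sub (s : ℝ) : cos s = cos (min s (2 * π - s)) := by
  rcases min_choice s (2 * π - s) with h | h <;> rw [h]
  rw [cos_two_pi_sub]

theorem cos_gram_det_eq (α β ρ : ℝ) :
    1 + 2 * cos ρ * cos α * cos β - cos ρ ^ 2 - cos α ^ 2 - cos β ^ 2
      = -((cos ρ - cos (α + β)) * (cos ρ - cos (α - β))) := by
  rw [cos_sub, cos_add]
  linear_combination (cos β ^ 2 - 1) * sin_sq_add_cos_sq α - sin α ^ 2 * sin_sq_add_cos_sq β

theorem posDef_cos_gram_iff {α β ρ : ℝ} (hα : α ∈ Set.Ioo 0 π) (hβ : β ∈ Set.Ioo 0 π)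
    (hρ : ρ ∈ Set.Ioo 0 π) :
    (!![1, cos ρ, cos α; cos ρ, 1, cos β; cos α, cos β, 1] : Matrix (Fin 3) (Fin 3) ℝ).PosDef ↔
      |α - β| < ρ ∧ ρ < min (α + β) (2 * π - (α + β)) := by
  have hsin : 0 ≤ sin α * sin β :=
    (mul_pos (sin_pos_of_pos_of_lt_pi hα.1 hα.2) (sin_pos_of_pos_of_lt_pi hβ.1 hβ.2)).le
  have hcos_le : cos (α + β) ≤ cos (α - β) := by
    rw [cos_add, cos_sub]
    linarith
  have hρ_sq : cos ρ ^ 2 < 1 := by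
    rw [cos_sq']
    linarith [pow_pos (sin_pos_of_pos_of_lt_pi hρ.1 hρ.2) 2]
  have hdiff : |α - β| ∈ Set.Icc 0 π :=
    ⟨abs_nonneg _, abs_sub_le_iff.2 ⟨by linarith [hα.2, hβ.1], by linarith [hα.1, hβ.2]⟩⟩
  have hsum : min (α + β) (2 * π - (α + β)) ∈ Set.Icc 0 π :=
    ⟨le_min (by linarith [hα.1, hβ.1]) (by linarith [hα.2, hβ.2]), min_two_pi_sub_le_pi _⟩
  rw [posDef_unitDiag_fin_three_iff hρ_sq, cos_gram_det_eq, neg_pos,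
    sub_mul_sub_neg_iff _ hcos_le, ← cos_abs (α - β), cos_eq_cos_min_two_pi_sub (α + β),
    strictAntiOn_cos.lt_iff_gt hsum (Set.Ioo_subset_Icc_self hρ),
    strictAntiOn_cos.lt_iff_gt (Set.Ioo_subset_Icc_self hρ) hdiff, and_comm]

theorem abs_sub_lt_min_iff (x y s c : ℝ) :
    |x - y| < min s (c - s) ↔
      (2 * x < x + y + s ∧ x + y + s < c + 2 * x) ∧
        (2 * y < x + y + s ∧ x + y + s < c + 2 * y) := by
  rw [abs_sub_lt_iff, lt_min_iff, lt_min_iff]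
  constructor
  · rintro ⟨⟨h₁, h₂⟩, h₃, h₄⟩
    exact ⟨⟨by linarith, by linarith⟩, by linarith, by linarith⟩
  · rintro ⟨⟨h₁, h₂⟩, h₃, h₄⟩
    exact ⟨⟨by linarith, by linarith⟩, by linarith, by linarith⟩

theorem exists_rho_posDef_iff_general {m : ℕ} (θ : Fin 2 → Fin m → ℝ)
    (hθ : ∀ (a : Fin 2) (i : Fin m), θ a i ∈ Set.Ioo 0 π) :
    (∃ ρ ∈ Set.Ioo (0 : ℝ) π, ∀ i : Fin m,
      (!![1, cos ρ, cos (θ 0 i);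
          cos ρ, 1, cos (θ 1 i);
          cos (θ 0 i), cos (θ 1 i), 1] : Matrix (Fin 3) (Fin 3) ℝ).PosDef) ↔
    (∀ (a : Fin 2) (i j : Fin m),
      2 * θ a i < θ 0 i + θ 1 i + θ 0 j + θ 1 j ∧
      θ 0 i + θ 1 i + θ 0 j + θ 1 j < 2 * π + 2 * θ a i) := by
  calc _ ↔ ∃ ρ ∈ Set.Ioo (0 : ℝ) π, ∀ i, |θ 0 i - θ 1 i| < ρ ∧
          ρ < min (θ 0 i + θ 1 i) (2 * π - (θ 0 i + θ 1 i)) :=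
        exists_congr fun ρ => and_congr_right fun hρ => forall_congr' fun i =>
          posDef_cos_gram_iff (hθ 0 i) (hθ 1 i) hρ
    _ ↔ ∀ i j, |θ 0 i - θ 1 i| < min (θ 0 j + θ 1 j) (2 * π - (θ 0 j + θ 1 j)) :=
        exists_mem_Ioo_forall_lt_and_lt_iff pi_pos (fun _ => abs_nonneg _)
          (fun _ => min_two_pi_sub_le_pi _)
    _ ↔ _ := by
        simp only [abs_sub_lt_min_iff, ← add_assoc, Fin.forall_fin_two]
        exact (forall_congr' fun _ => forall_and).trans forall_and

theorem exists_rho_posDef_iff {m : ℕ} (hm : 1 ≤ m) (θ : Fin 2 → Fin m → ℝ)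
    (hθ : ∀ (a : Fin 2) (i : Fin m), θ a i ∈ Set.Ioo 0 π) :
    (∃ ρ ∈ Set.Ioo (0 : ℝ) π, ∀ i : Fin m,
      (!![1, cos ρ, cos (θ 0 i);
          cos ρ, 1, cos (θ 1 i);
          cos (θ 0 i), cos (θ 1 i), 1] : Matrix (Fin 3) (Fin 3) ℝ).PosDef) ↔
    (∀ (a : Fin 2) (i j : Fin m),
      2 * θ a i < θ 0 i + θ 1 i + θ 0 j + θ 1 j ∧
      θ 0 i + θ 1 i + θ 0 j + θ 1 j < 2 * π + 2 * θ a i) :=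
  exists_rho_posDef_iff_general θ hθ
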